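/- arXiv:2510.03937 — 2 statements merged into one kernel-verified Lean document; each statement's English description precedes it below -/
import Mathlib

section
/- (Pakes' Lemma) An irreducible Markov chain on the nonnegative integers is positive recurrent if the mean drift gamma_i = E[X_{n+1} - X_n | X_n = i] is finite for every state i and limsup_{i -> infinity} gamma_i < 0. -/
open scoped ENNReal BigOperators
open Filter

/-- A discrete-time Markov chain on the nonnegative integers, given by its
row-stochastic transition matrix. -/
structure MarkovChain where
  p : ℕ → ℕ → ℝ≥0∞
  row_sum : ∀ i, ∑' j, p i j = 1

namespace MarkovChain

/-- `n`-step transition probabilities. -/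
noncomputable def step (M : MarkovChain) : ℕ → ℕ → ℕ → ℝ≥0∞
  | 0, i, j => if i = j then 1 else 0
  | (n+1), i, j => ∑' k, M.p i k * M.step n k j

/-- Irreducibility: every state reaches every other state with positive probability. -/
def Irreducible (M : MarkovChain) : Prop := ∀ i j, ∃ n, 0 < M.step n i j

/-- Probability, starting from `j`, that the chain reaches state `i` for the first
time at time `n` (time `0` counts iff `j = i`). -/
noncomputable def hitAt (M : MarkovChain) (i : ℕ) : ℕ → ℕ → ℝ≥0∞
  | 0, j => if j = i then 1 else 0
  | (n+1), j => if j = i then 0 else ∑' k, M.p j k * M.hitAt i n k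

/-- Probability that the first return to `i` occurs at time `n + 1`. -/
noncomputable def firstReturn (M : MarkovChain) (i n : ℕ) : ℝ≥0∞ :=
  ∑' k, M.p i k * M.hitAt i n k

/-- The chain is recurrent: return to each state is almost sure. -/
def Recurrent (M : MarkovChain) : Prop := ∀ i, ∑' n, M.firstReturn i n = 1

/-- The chain is positive recurrent: recurrent with finite expected return times. -/
def PositiveRecurrent (M : MarkovChain) : Prop :=
  M.Recurrent ∧ ∀ i, ∑' n : ℕ, ((n : ℝ≥0∞) + 1) * M.firstReturn i n < ⊤

/-- Null recurrent: recurrent but not positive recurrent. -/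
def NullRecurrent (M : MarkovChain) : Prop := M.Recurrent ∧ ¬ M.PositiveRecurrent

/-- The chain is transient: return to each state happens with probability `< 1`. -/
def Transient (M : MarkovChain) : Prop := ∀ i, ∑' n, M.firstReturn i n < 1

/-- Mean drift at state `i`. -/
noncomputable def drift (M : MarkovChain) (i : ℕ) : ℝ :=
  ∑' j, (M.p i j).toReal * ((j : ℝ) - i)

/-- The mean drift at `i` is finite (well-defined). -/
def DriftFinite (M : MarkovChain) (i : ℕ) : Prop :=
  Summable fun j => (M.p i j).toReal * ((j : ℝ) - i)

/-- Second-moment drift at state `i`. -/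
noncomputable def secondMoment (M : MarkovChain) (i : ℕ) : ℝ :=
  ∑' j, (M.p i j).toReal * ((j : ℝ) - i) ^ 2

/-- Downward uniformly bounded with bound `k`: no downward jumps longer than `k`. -/
def DownwardBounded (M : MarkovChain) (k : ℕ) : Prop :=
  ∀ i j, j + k < i → M.p i j = 0

/-- Uniformly bounded with bound `d`: no jumps longer than `d`. -/
def UniformlyBounded (M : MarkovChain) (d : ℕ) : Prop :=
  ∀ i j : ℕ, (d : ℤ) < |(i : ℤ) - j| → M.p i j = 0

end MarkovChain

/-!
Fix a target state `i₀`; let `P` be the transition operator and `Q` that of the chain killed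
at `i₀`. A finite `V ≥ 0` with `1 + Q V ≤ V` bounds the expected hitting time of `i₀` from `j`
by `V j`; if moreover `P V i₀ < ∞`, the expected return time to `i₀` is finite.

Negative drift makes `j / ε` such a function outside the finite set `A = {0, …, N - 1} ∪ {i₀}`;
the bounded drift inside `A` is paid for by adding a multiple of the expected number of visits
to `A` before reaching `i₀`. That number is uniformly bounded: by irreducibility, every state
of `A` reaches `i₀` within `m` steps with probability at least some `1 - s > 0`, so the visits
to `A` come in blocks of length `m` whose number is dominated by a geometric variable.
-/

lemma Filter.exists_pos_eventually_le_neg_of_limsup_neg {α : Type*} {f : Filter α}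
    {u : α → ℝ} (h : limsup u f < 0) : ∃ ε > 0, ∀ᶠ x in f, u x ≤ -ε := by
  have hbdd : f.IsBoundedUnder (· ≤ ·) u := by
    by_contra hu
    simp [Real.limsup_of_not_isBoundedUnder hu] at h
  refine ⟨-(limsup u f / 2), by linarith, ?_⟩
  filter_upwards [eventually_lt_of_limsup_lt (by linarith : limsup u f < limsup u f / 2) hbdd]
    with x hx
  linarith

namespace MarkovChain

variable (M : MarkovChain)

noncomputable def transition : Module.End ℝ≥0∞ (ℕ → ℝ≥0∞) where
  toFun f j := ∑' k, M.p j k * f k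
  map_add' f g := funext fun j => by
    simp only [Pi.add_apply, mul_add, ENNReal.tsum_add]
  map_smul' c f := funext fun j => by
    simp only [Pi.smul_apply, smul_eq_mul, RingHom.id_apply, mul_left_comm (M.p j _),
      ENNReal.tsum_mul_left]

lemma transition_apply (f : ℕ → ℝ≥0∞) (j : ℕ) :
    M.transition f j = ∑' k, M.p j k * f k := rfl

lemma transition_mono : Monotone M.transition := fun _ _ hfg _ =>
  ENNReal.tsum_le_tsum fun k => mul_le_mul_right (hfg k) _

lemma transition_one : M.transition 1 = 1 :=
  funext fun j => by simpa [transition_apply] using M.row_sum j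

lemma transition_tsum_apply (F : ℕ → ℕ → ℝ≥0∞) (j : ℕ) :
    M.transition (fun k => ∑' t, F t k) j = ∑' t, M.transition (F t) j := by
  simp only [transition_apply, ← ENNReal.tsum_mul_left]
  exact ENNReal.tsum_comm

variable (i₀ : ℕ)

/-- `(M.killed i₀ ^ n) f j` is the expectation of `f (X n)` on the event that the chain started
at `j` avoids `i₀` at the times `0, …, n - 1`. -/
noncomputable def killed : Module.End ℝ≥0∞ (ℕ → ℝ≥0∞) where
  toFun f j := if j = i₀ then 0 else M.transition f j
  map_add' f g := funext fun j => by by_cases hj : j = i₀ <;> simp [hj]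
  map_smul' c f := funext fun j => by by_cases hj : j = i₀ <;> simp [hj]

@[simp] lemma killed_apply_self (f : ℕ → ℝ≥0∞) : M.killed i₀ f i₀ = 0 := if_pos rfl

lemma killed_apply_of_ne (f : ℕ → ℝ≥0∞) {j : ℕ} (hj : j ≠ i₀) :
    M.killed i₀ f j = M.transition f j := if_neg hj

lemma killed_mono : Monotone (M.killed i₀) := fun _ _ hfg j => by
  by_cases hj : j = i₀
  · simp [hj]
  · simpa only [killed_apply_of_ne _ _ _ hj] using M.transition_mono hfg j

lemma killed_pow_mono (n : ℕ) : Monotone (M.killed i₀ ^ n) := by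
  rw [Module.End.coe_pow]
  exact (M.killed_mono i₀).iterate n

lemma killed_one_add_single : M.killed i₀ 1 + Pi.single i₀ 1 = 1 := funext fun j => by
  by_cases hj : j = i₀
  · subst hj; simp
  · simp [killed_apply_of_ne _ _ _ hj, hj, transition_one]

lemma killed_tsum_apply (F : ℕ → ℕ → ℝ≥0∞) (j : ℕ) :
    M.killed i₀ (fun k => ∑' t, F t k) j = ∑' t, M.killed i₀ (F t) j := by
  by_cases hj : j = i₀
  · simp [hj]
  · simp only [killed_apply_of_ne _ _ _ hj, transition_tsum_apply]

lemma hitAt_zero_eq : M.hitAt i₀ 0 = Pi.single i₀ 1 :=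
  funext fun j => by simp [hitAt, Pi.single_apply]

lemma hitAt_succ_eq (n : ℕ) : M.hitAt i₀ (n + 1) = M.killed i₀ (M.hitAt i₀ n) := rfl

lemma killed_pow_one_add_sum_hitAt (n : ℕ) :
    (M.killed i₀ ^ n) 1 + ∑ t ∈ Finset.range n, M.hitAt i₀ t = 1 := by
  induction n with
  | zero => simp
  | succ n ih =>
    rw [Finset.sum_range_succ', pow_succ', Module.End.mul_apply, hitAt_zero_eq]
    simp only [hitAt_succ_eq, ← map_sum, ← add_assoc, ← map_add, ih, killed_one_add_single]

lemma sum_hitAt_le_one (n : ℕ) : ∑ t ∈ Finset.range n, M.hitAt i₀ t ≤ 1 :=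
  (M.killed_pow_one_add_sum_hitAt i₀ n).le.trans' le_add_self

lemma killed_pow_one_le_one (n : ℕ) : (M.killed i₀ ^ n) 1 ≤ 1 :=
  (M.killed_pow_one_add_sum_hitAt i₀ n).le.trans' le_self_add

lemma killed_pow_one_antitone : Antitone fun n => (M.killed i₀ ^ n) 1 := by
  refine antitone_nat_of_succ_le fun n => ?_
  rw [pow_succ, Module.End.mul_apply]
  exact M.killed_pow_mono i₀ n (M.killed_pow_one_le_one i₀ 1)

lemma step_le_one (n j k : ℕ) : M.step n j k ≤ 1 := by
  induction n generalizing j with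
  | zero => by_cases h : j = k <;> simp [step, h]
  | succ n ih =>
    calc M.step (n + 1) j k = M.transition (fun l => M.step n l k) j := rfl
      _ ≤ M.transition 1 j := M.transition_mono ih j
      _ = 1 := by rw [transition_one, Pi.one_apply]

/-- Avoiding `i₀` up to time `n` and being at `i₀` at time `n` are disjoint events. -/
lemma killed_pow_succ_one_add_step_le (n j : ℕ) :
    (M.killed i₀ ^ (n + 1)) 1 j + M.step n j i₀ ≤ 1 := by
  induction n generalizing j with
  | zero =>
    by_cases hj : j = i₀
    · simp [hj, step]
    · simp [killed_apply_of_ne _ _ _ hj, transition_one, step, hj]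
  | succ n ih =>
    rw [pow_succ', Module.End.mul_apply]
    by_cases hj : j = i₀
    · subst hj
      simpa using M.step_le_one (n + 1) j j
    · calc M.killed i₀ ((M.killed i₀ ^ (n + 1)) 1) j + M.step (n + 1) j i₀
          = M.transition ((M.killed i₀ ^ (n + 1)) 1 + fun k => M.step n k i₀) j := by
            rw [killed_apply_of_ne _ _ _ hj, map_add]; rfl
        _ ≤ M.transition 1 j := M.transition_mono ih j
        _ = 1 := by rw [transition_one, Pi.one_apply]

lemma killed_pow_succ_one_lt_one {n a : ℕ} (h : 0 < M.step n a i₀) :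
    (M.killed i₀ ^ (n + 1)) 1 a < 1 :=
  (ENNReal.lt_add_right (ne_top_of_le_ne_top ENNReal.one_ne_top
    (M.killed_pow_one_le_one i₀ (n + 1) a)) h.ne').trans_le
    (M.killed_pow_succ_one_add_step_le i₀ n a)

section Lyapunov

variable {i₀} {V : ℕ → ℝ≥0∞}

lemma one_add_killed_le (hV : 1 + M.killed i₀ V ≤ V) {f : ℕ → ℝ≥0∞} (hf : f ≤ V) :
    1 + M.killed i₀ f ≤ V :=
  le_trans (by gcongr; exact M.killed_mono i₀ hf) hV

lemma sum_killed_pow_one_le (hV : 1 + M.killed i₀ V ≤ V) (T : ℕ) :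
    ∑ t ∈ Finset.range T, (M.killed i₀ ^ t) 1 ≤ V := by
  induction T with
  | zero => simp
  | succ T ih =>
    refine le_of_eq_of_le ?_ (M.one_add_killed_le hV ih)
    simp only [Finset.sum_range_succ', pow_succ', Module.End.mul_apply, ← map_sum, pow_zero,
      Module.End.one_apply, add_comm]

lemma sum_succ_nsmul_hitAt_le (hV : 1 + M.killed i₀ V ≤ V) (T : ℕ) :
    ∑ n ∈ Finset.range T, (n + 1) • M.hitAt i₀ n ≤ V := by
  induction T with
  | zero => simp
  | succ T ih =>
    calc ∑ n ∈ Finset.range (T + 1), (n + 1) • M.hitAt i₀ n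
        = M.killed i₀ (∑ n ∈ Finset.range T, (n + 1) • M.hitAt i₀ n) +
            M.killed i₀ (∑ n ∈ Finset.range T, M.hitAt i₀ n) + Pi.single i₀ 1 := by
          simp only [Finset.sum_range_succ' _ T, hitAt_succ_eq, ← map_nsmul, ← map_sum, ← map_add,
            ← Finset.sum_add_distrib, ← succ_nsmul, hitAt_zero_eq, zero_add, one_smul]
      _ ≤ M.killed i₀ (∑ n ∈ Finset.range T, (n + 1) • M.hitAt i₀ n) + M.killed i₀ 1 +
            Pi.single i₀ 1 := by
          gcongr
          exact M.killed_mono i₀ (M.sum_hitAt_le_one i₀ T)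
      _ = 1 + M.killed i₀ (∑ n ∈ Finset.range T, (n + 1) • M.hitAt i₀ n) := by
          rw [add_assoc, killed_one_add_single, add_comm]
      _ ≤ V := M.one_add_killed_le hV ih

lemma tsum_hitAt_eq_one (hV : 1 + M.killed i₀ V ≤ V) {j : ℕ} (hVj : V j ≠ ⊤) :
    ∑' n, M.hitAt i₀ n j = 1 := by
  refine le_antisymm (ENNReal.tsum_le_of_sum_range_le fun n => ?_) ?_
  · simpa only [Finset.sum_apply, Pi.one_apply] using M.sum_hitAt_le_one i₀ n j
  have hsurv : Tendsto (fun n => (M.killed i₀ ^ n) 1 j) atTop (nhds 0) := by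
    refine ENNReal.tendsto_atTop_zero_of_tsum_ne_top (ne_top_of_le_ne_top hVj ?_)
    refine ENNReal.tsum_le_of_sum_range_le fun T => ?_
    simpa only [Finset.sum_apply] using M.sum_killed_pow_one_le hV T j
  refine ge_of_tendsto (by simpa using hsurv.add_const (∑' n, M.hitAt i₀ n j))
    (Eventually.of_forall fun n => ?_)
  calc 1 = (M.killed i₀ ^ n) 1 j + ∑ t ∈ Finset.range n, M.hitAt i₀ t j := by
        rw [← Finset.sum_apply, ← Pi.add_apply, killed_pow_one_add_sum_hitAt, Pi.one_apply]
    _ ≤ (M.killed i₀ ^ n) 1 j + ∑' t, M.hitAt i₀ t j := by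
        gcongr
        exact ENNReal.sum_le_tsum _

lemma tsum_firstReturn_eq_one (hV : 1 + M.killed i₀ V ≤ V) (hVfin : ∀ j, V j ≠ ⊤) :
    ∑' n, M.firstReturn i₀ n = 1 :=
  calc ∑' n, M.firstReturn i₀ n = M.transition (fun k => ∑' n, M.hitAt i₀ n k) i₀ :=
        (M.transition_tsum_apply _ _).symm
    _ = 1 := by
        simp only [M.tsum_hitAt_eq_one hV (hVfin _), ← Pi.one_def, transition_one, Pi.one_apply]

lemma tsum_succ_mul_firstReturn_lt_top (hV : 1 + M.killed i₀ V ≤ V)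
    (hPV : M.transition V i₀ ≠ ⊤) :
    ∑' n : ℕ, ((n : ℝ≥0∞) + 1) * M.firstReturn i₀ n < ⊤ :=
  calc ∑' n : ℕ, ((n : ℝ≥0∞) + 1) * M.firstReturn i₀ n
      = ∑' n : ℕ, M.transition (fun k => ((n : ℝ≥0∞) + 1) * M.hitAt i₀ n k) i₀ := by
        simp only [transition_apply, firstReturn, ← ENNReal.tsum_mul_left, mul_left_comm]
    _ = M.transition (fun k => ∑' n : ℕ, ((n : ℝ≥0∞) + 1) * M.hitAt i₀ n k) i₀ :=
        (M.transition_tsum_apply _ _).symm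
    _ ≤ M.transition V i₀ := by
        refine M.transition_mono (fun k => ENNReal.tsum_le_of_sum_range_le fun T => ?_) i₀
        simpa [Finset.sum_apply, nsmul_eq_mul] using M.sum_succ_nsmul_hitAt_le hV T k
    _ < ⊤ := hPV.lt_top

end Lyapunov

section Visits

variable (A : Finset ℕ)

noncomputable def visitsBefore (T : ℕ) : ℕ → ℝ≥0∞ :=
  ∑ t ∈ Finset.range T, (M.killed i₀ ^ t) ((A : Set ℕ).indicator 1)

noncomputable def visits (j : ℕ) : ℝ≥0∞ :=
  ∑' t, (M.killed i₀ ^ t) ((A : Set ℕ).indicator 1) j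

lemma visitsBefore_succ (T : ℕ) :
    M.visitsBefore i₀ A (T + 1) =
      (A : Set ℕ).indicator 1 + M.killed i₀ (M.visitsBefore i₀ A T) := by
  simp only [visitsBefore, Finset.sum_range_succ', pow_succ', Module.End.mul_apply, ← map_sum,
    pow_zero, Module.End.one_apply, add_comm]

lemma visitsBefore_add (u v : ℕ) :
    M.visitsBefore i₀ A (v + u) =
      M.visitsBefore i₀ A v + (M.killed i₀ ^ v) (M.visitsBefore i₀ A u) := by
  simp only [visitsBefore, Finset.sum_range_add, map_sum, ← Module.End.mul_apply, ← pow_add]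

lemma visitsBefore_mono {T T' : ℕ} (h : T ≤ T') :
    M.visitsBefore i₀ A T ≤ M.visitsBefore i₀ A T' :=
  Finset.sum_le_sum_of_subset (Finset.range_subset_range.mpr h)

lemma visitsBefore_le (T : ℕ) : M.visitsBefore i₀ A T ≤ T := by
  calc M.visitsBefore i₀ A T ≤ ∑ _t ∈ Finset.range T, (1 : ℕ → ℝ≥0∞) :=
        Finset.sum_le_sum fun t _ => (M.killed_pow_mono i₀ t
          (Set.indicator_le_self' fun _ _ => zero_le_one)).trans (M.killed_pow_one_le_one i₀ t)
    _ = T := by simp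

/-- Maximum principle: off `A`, `visitsBefore (T + 1)` is the `P`-average of `visitsBefore T`. -/
lemma visitsBefore_le_sup (hA : i₀ ∈ A) (T j : ℕ) :
    M.visitsBefore i₀ A T j ≤ A.sup (M.visitsBefore i₀ A T) := by
  induction T generalizing j with
  | zero => simp [visitsBefore]
  | succ T ih =>
    by_cases hj : j ∈ A
    · exact Finset.le_sup hj
    have hji₀ : j ≠ i₀ := ne_of_mem_of_not_mem hA hj |>.symm
    calc M.visitsBefore i₀ A (T + 1) j = M.transition (M.visitsBefore i₀ A T) j := by
          simp [visitsBefore_succ, hj, killed_apply_of_ne _ _ _ hji₀]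
      _ ≤ M.transition (fun _ => A.sup (M.visitsBefore i₀ A T)) j := M.transition_mono ih j
      _ = A.sup (M.visitsBefore i₀ A T) := by
          simp [transition_apply, ENNReal.tsum_mul_right, M.row_sum]
      _ ≤ A.sup (M.visitsBefore i₀ A (T + 1)) :=
          Finset.sup_mono_fun fun a _ => M.visitsBefore_mono i₀ A T.le_succ a

/-- Each block of `m` steps started in `A` contributes at most `m` visits and reaches `i₀` with
probability at least `1 - s`, whence the geometric bound. -/
lemma sup_visitsBefore_mul_le (hA : i₀ ∈ A) {m : ℕ} {s : ℝ≥0∞} (hs : s < 1)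
    (hm : ∀ a ∈ A, (M.killed i₀ ^ m) 1 a ≤ s) (q : ℕ) :
    A.sup (M.visitsBefore i₀ A (q * m)) ≤ m / (1 - s) := by
  set C : ℝ≥0∞ := m / (1 - s)
  have hC : m + C * s = C := by
    have h1s : 1 - s ≠ 0 := (tsub_pos_of_lt hs).ne'
    calc (m : ℝ≥0∞) + C * s = C * (1 - s) + C * s := by
          rw [ENNReal.div_mul_cancel h1s (ENNReal.sub_ne_top ENNReal.one_ne_top)]
      _ = C := by rw [← mul_add, tsub_add_cancel_of_le hs.le, mul_one]
  induction q with
  | zero => simp [visitsBefore]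
  | succ q ih =>
    refine Finset.sup_le fun a ha => ?_
    have hbound : M.visitsBefore i₀ A (q * m) ≤ C • 1 := fun j => by
      simpa using (M.visitsBefore_le_sup i₀ A hA (q * m) j).trans ih
    calc M.visitsBefore i₀ A ((q + 1) * m) a
        = M.visitsBefore i₀ A m a + (M.killed i₀ ^ m) (M.visitsBefore i₀ A (q * m)) a := by
          rw [add_one_mul, add_comm, visitsBefore_add, Pi.add_apply]
      _ ≤ m + C * s := by
          gcongr
          · exact M.visitsBefore_le i₀ A m a
          · calc (M.killed i₀ ^ m) (M.visitsBefore i₀ A (q * m)) a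
                ≤ (M.killed i₀ ^ m) (C • 1) a := M.killed_pow_mono i₀ m hbound a
              _ = C * (M.killed i₀ ^ m) 1 a := by rw [map_smul, Pi.smul_apply, smul_eq_mul]
              _ ≤ C * s := by gcongr; exact hm a ha
      _ = C := hC

lemma exists_killed_pow_one_lt_one (hirr : ∀ a ∈ A, ∃ n, 0 < M.step n a i₀) :
    ∃ m, 0 < m ∧ ∀ a ∈ A, (M.killed i₀ ^ m) 1 a < 1 := by
  classical
  choose! n hn using hirr
  refine ⟨A.sup n + 1, Nat.succ_pos _, fun a ha => ?_⟩
  calc (M.killed i₀ ^ (A.sup n + 1)) 1 a ≤ (M.killed i₀ ^ (n a + 1)) 1 a :=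
        M.killed_pow_one_antitone i₀ (Nat.succ_le_succ (Finset.le_sup ha)) a
    _ < 1 := M.killed_pow_succ_one_lt_one i₀ (hn a ha)

theorem exists_visits_le (hA : i₀ ∈ A) (hirr : ∀ a ∈ A, ∃ n, 0 < M.step n a i₀) :
    ∃ C ≠ ⊤, ∀ j, M.visits i₀ A j ≤ C := by
  obtain ⟨m, hm0, hm⟩ := M.exists_killed_pow_one_lt_one i₀ A hirr
  set s := A.sup fun a => (M.killed i₀ ^ m) 1 a
  have hs : s < 1 := (Finset.sup_lt_iff zero_lt_one).mpr hm
  refine ⟨m / (1 - s), ENNReal.div_ne_top (ENNReal.natCast_ne_top m) (tsub_pos_of_lt hs).ne',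
    fun j => ENNReal.tsum_le_of_sum_range_le fun T => ?_⟩
  calc ∑ t ∈ Finset.range T, (M.killed i₀ ^ t) ((A : Set ℕ).indicator 1) j
      = M.visitsBefore i₀ A T j := by simp [visitsBefore, Finset.sum_apply]
    _ ≤ M.visitsBefore i₀ A (T * m) j :=
        M.visitsBefore_mono i₀ A (Nat.le_mul_of_pos_right T hm0) j
    _ ≤ A.sup (M.visitsBefore i₀ A (T * m)) := M.visitsBefore_le_sup i₀ A hA _ j
    _ ≤ m / (1 - s) :=
        M.sup_visitsBefore_mul_le i₀ A hA hs (fun _ ha => Finset.le_sup ha) T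

lemma visits_eq : M.visits i₀ A = (A : Set ℕ).indicator 1 + M.killed i₀ (M.visits i₀ A) :=
  funext fun j => by
    unfold visits
    rw [Pi.add_apply, killed_tsum_apply, tsum_eq_zero_add' ENNReal.summable]
    simp only [pow_succ', Module.End.mul_apply, pow_zero, Module.End.one_apply]

lemma one_add_killed_add_smul_visits_le {h : ℕ → ℝ≥0∞} {K : ℝ≥0∞}
    (hh : 1 + M.killed i₀ h ≤ h + K • (A : Set ℕ).indicator 1) :
    1 + M.killed i₀ (h + K • M.visits i₀ A) ≤ h + K • M.visits i₀ A := by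
  calc 1 + M.killed i₀ (h + K • M.visits i₀ A)
      = 1 + M.killed i₀ h + K • M.killed i₀ (M.visits i₀ A) := by
        rw [map_add, map_smul, add_assoc]
    _ ≤ h + K • (A : Set ℕ).indicator 1 + K • M.killed i₀ (M.visits i₀ A) := by gcongr
    _ = h + K • M.visits i₀ A := by rw [add_assoc, ← smul_add, ← visits_eq]

end Visits

section Drift

lemma p_ne_top (j k : ℕ) : M.p j k ≠ ⊤ :=
  ne_top_of_le_ne_top ENNReal.one_ne_top (M.row_sum j ▸ ENNReal.le_tsum k)

variable {M} {j : ℕ}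

lemma hasSum_toReal_mul_natCast (hj : M.DriftFinite j) :
    HasSum (fun k => (M.p j k).toReal * k) (j + M.drift j) := by
  have hp : HasSum (fun k => (M.p j k).toReal) 1 := by
    have := (ENNReal.summable_toReal (M.row_sum j ▸ ENNReal.one_ne_top)).hasSum
    rwa [← ENNReal.tsum_toReal_eq (M.p_ne_top j), M.row_sum, ENNReal.toReal_one] at this
  convert hj.hasSum.add (hp.mul_right (j : ℝ)) using 1
  · exact funext fun k => by ring
  · rw [drift, one_mul, add_comm]

lemma transition_natCast_apply (hj : M.DriftFinite j) :
    M.transition (fun k => (k : ℝ≥0∞)) j = ENNReal.ofReal (j + M.drift j) := by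
  have hsum := hasSum_toReal_mul_natCast hj
  rw [← hsum.tsum_eq, ENNReal.ofReal_tsum_of_nonneg (fun k => by positivity) hsum.summable,
    transition_apply]
  refine tsum_congr fun k => ?_
  rw [ENNReal.ofReal_mul ENNReal.toReal_nonneg, ENNReal.ofReal_toReal (M.p_ne_top j k),
    ENNReal.ofReal_natCast]

lemma one_add_mul_transition_natCast_le (hj : M.DriftFinite j) {ε : ℝ} (hε : 0 < ε)
    (hdrift : M.drift j ≤ -ε) :
    1 + ENNReal.ofReal ε⁻¹ * M.transition (fun k => (k : ℝ≥0∞)) j ≤ ENNReal.ofReal ε⁻¹ * j := by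
  have hnonneg : 0 ≤ (j : ℝ) + M.drift j :=
    (hasSum_toReal_mul_natCast hj).nonneg fun k => by positivity
  have hε' : ε⁻¹ * M.drift j ≤ -1 := by
    rw [inv_mul_le_iff₀ hε]
    linarith
  rw [transition_natCast_apply hj, ← ENNReal.ofReal_mul (by positivity), ← ENNReal.ofReal_one,
    ← ENNReal.ofReal_add zero_le_one (by positivity), ← ENNReal.ofReal_natCast,
    ← ENNReal.ofReal_mul (by positivity)]
  exact ENNReal.ofReal_le_ofReal (by linarith [mul_add ε⁻¹ (j : ℝ) (M.drift j)])

lemma mul_transition_natCast_le (hj : M.DriftFinite j) (c : ℝ≥0∞) :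
    c * M.transition (fun k => (k : ℝ≥0∞)) j ≤ c * j + c * ENNReal.ofReal (M.drift j) := by
  rw [transition_natCast_apply hj, ← mul_add, ← ENNReal.ofReal_natCast]
  gcongr
  exact ENNReal.ofReal_add_le

end Drift

lemma one_add_killed_le_of_drift (hfin : ∀ j, M.DriftFinite j) {ε : ℝ} (hε : 0 < ε)
    {A : Finset ℕ} (hA : i₀ ∈ A) (hout : ∀ j ∉ A, M.drift j ≤ -ε) {K : ℝ≥0∞}
    (hK : ∀ j ∈ A, 1 + ENNReal.ofReal ε⁻¹ * ENNReal.ofReal (M.drift j) ≤ K) :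
    1 + M.killed i₀ (fun j : ℕ => ENNReal.ofReal ε⁻¹ * j) ≤
      (fun j : ℕ => ENNReal.ofReal ε⁻¹ * j) + K • (A : Set ℕ).indicator 1 := by
  set c := ENNReal.ofReal ε⁻¹
  have hP : ∀ j, M.transition (fun k => c * k) j = c * M.transition (fun k => (k : ℝ≥0∞)) j :=
    fun j => by simp only [transition_apply, mul_left_comm _ c, ENNReal.tsum_mul_left]
  intro j
  by_cases hji₀ : j = i₀
  · subst hji₀
    simpa [hA] using (le_self_add.trans (hK j hA)).trans le_add_self
  simp only [Pi.add_apply, Pi.one_apply, Pi.smul_apply, smul_eq_mul,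
    killed_apply_of_ne _ _ _ hji₀, hP]
  by_cases hj : j ∈ A
  · calc 1 + c * M.transition (fun k => (k : ℝ≥0∞)) j
        ≤ 1 + (c * j + c * ENNReal.ofReal (M.drift j)) := by
          gcongr
          exact mul_transition_natCast_le (hfin j) c
      _ = c * j + (1 + c * ENNReal.ofReal (M.drift j)) := by ring
      _ ≤ c * j + K * (A : Set ℕ).indicator 1 j := by
          rw [Set.indicator_of_mem (Finset.mem_coe.mpr hj), Pi.one_apply, mul_one]
          gcongr
          exact hK j hj
  · simpa [hj] using one_add_mul_transition_natCast_le (hfin j) hε (hout j hj)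

theorem exists_lyapunov (hirr : ∀ a, ∃ n, 0 < M.step n a i₀) (hfin : ∀ j, M.DriftFinite j)
    {ε : ℝ} (hε : 0 < ε) {N : ℕ} (hN : ∀ j ≥ N, M.drift j ≤ -ε) :
    ∃ V : ℕ → ℝ≥0∞, 1 + M.killed i₀ V ≤ V ∧ (∀ j, V j ≠ ⊤) ∧ M.transition V i₀ ≠ ⊤ := by
  set A := insert i₀ (Finset.range N)
  have hA : i₀ ∈ A := Finset.mem_insert_self _ _
  have hout : ∀ j ∉ A, M.drift j ≤ -ε := fun j hj =>
    hN j (not_lt.mp fun h => hj (Finset.mem_insert_of_mem (Finset.mem_range.mpr h)))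
  obtain ⟨C, hC, hvisits⟩ := M.exists_visits_le i₀ A hA fun a _ => hirr a
  set c := ENNReal.ofReal ε⁻¹
  set K := A.sup fun j => 1 + c * ENNReal.ofReal (M.drift j)
  have hK : K ≠ ⊤ := ((Finset.sup_lt_iff bot_lt_top).mpr fun j _ =>
    (ENNReal.add_ne_top.mpr ⟨ENNReal.one_ne_top, ENNReal.mul_ne_top ENNReal.ofReal_ne_top
      ENNReal.ofReal_ne_top⟩).lt_top).ne
  have hPvisits : M.transition (M.visits i₀ A) i₀ ≤ C := by
    simpa [transition_apply, ENNReal.tsum_mul_right, M.row_sum] using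
      M.transition_mono (fun j => hvisits j) i₀
  refine ⟨fun j => c * j + K * M.visits i₀ A j, ?_, fun j => ?_, ?_⟩
  · exact M.one_add_killed_add_smul_visits_le i₀ A
      (M.one_add_killed_le_of_drift i₀ hfin hε hA hout fun _ hj =>
        Finset.le_sup (f := fun j => 1 + c * ENNReal.ofReal (M.drift j)) hj)
  · exact ENNReal.add_ne_top.mpr ⟨ENNReal.mul_ne_top ENNReal.ofReal_ne_top
      (ENNReal.natCast_ne_top j), ENNReal.mul_ne_top hK (ne_top_of_le_ne_top hC (hvisits j))⟩
  · have hsplit : M.transition (fun j => c * j + K * M.visits i₀ A j) i₀ =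
        c * M.transition (fun k => (k : ℝ≥0∞)) i₀ + K * M.transition (M.visits i₀ A) i₀ := by
      simp only [transition_apply, mul_add, ENNReal.tsum_add, mul_left_comm _ c,
        mul_left_comm _ K, ENNReal.tsum_mul_left]
    rw [hsplit, transition_natCast_apply (hfin i₀)]
    exact ENNReal.add_ne_top.mpr ⟨ENNReal.mul_ne_top ENNReal.ofReal_ne_top ENNReal.ofReal_ne_top,
      ENNReal.mul_ne_top hK (ne_top_of_le_ne_top hC hPvisits)⟩

end MarkovChain

/-- Pakes' Lemma: an irreducible chain with finite mean drifts and
`limsup_i γ_i < 0` is positive recurrent. -/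
theorem stmt1 (M : MarkovChain) (hirr : M.Irreducible)
    (hfin : ∀ i, M.DriftFinite i)
    (hlimsup : Filter.limsup M.drift Filter.atTop < 0) :
    M.PositiveRecurrent := by
  obtain ⟨ε, hε, hdrift⟩ := Filter.exists_pos_eventually_le_neg_of_limsup_neg hlimsup
  obtain ⟨N, hN⟩ := eventually_atTop.mp hdrift
  choose V hV hVfin hPV using fun i => M.exists_lyapunov i (fun a => hirr a i) hfin hε hN
  exact ⟨fun i => M.tsum_firstReturn_eq_one (hV i) (hVfin i),
    fun i => M.tsum_succ_mul_firstReturn_lt_top (hV i) (hPV i)⟩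
end

section
/- The random walk on the nonnegative integers with p_{i,j} = 1/(2k+1) for all j with |i-j| <= k when i >= k, and p_{i,i+1} = 1 for i < k, is null recurrent. -/
open scoped ENNReal BigOperators
open Filter

/-!
Recurrence. Above `k` the function `log (1 + j)` is superharmonic for the walk (Jensen's
inequality for the concave `log`), so from every state the chain almost surely enters a finite
initial segment `{0, …, c}`: it cannot linger forever strictly between `c` and a level `N`, and it
overshoots `N` first with probability at most `log (1 + j) / log (1 + N)`. The probability of
ever hitting `i` is superharmonic off `i`, hence everywhere at least its minimum `θ` over the
segment. At a minimising state superharmonicity forces the value `θ` at every successor, and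
irreducibility carries it to `i` itself, where the value is `1`.

Null recurrence. Started at `2k` and stopped on entering `{0, …, k}`, the walk is a martingale
that climbs at most `k` per step, so it survives `n` steps with probability at least `1 / (n + 1)`.
The return time to `k`, whose first step goes to `2k` with probability `1 / (2k + 1)`, therefore
has tails of order `1 / n` and infinite mean.
-/

open Finset Topology

namespace ENNReal

theorem eq_of_tsum_mul_le {α : Type*} {p f : α → ℝ≥0∞} {θ : ℝ≥0∞} (hp : ∑' l, p l = 1)
    (hθ : θ ≠ ∞) (hf : ∀ l, θ ≤ f l) (hsum : ∑' l, p l * f l ≤ θ) {l : α} (hl : p l ≠ 0) :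
    f l = θ := by
  have hsplit : ∑' l, p l * f l = θ + ∑' l, p l * (f l - θ) := by
    conv_lhs => enter [1, l]; rw [← add_tsub_cancel_of_le (hf l), mul_add]
    rw [ENNReal.tsum_add, ENNReal.tsum_mul_right, hp, one_mul]
  have hexcess : ∑' l, p l * (f l - θ) = 0 :=
    nonpos_iff_eq_zero.1 <| ENNReal.le_of_add_le_add_left hθ <| by rwa [add_zero, ← hsplit]
  have := (mul_eq_zero.1 (ENNReal.tsum_eq_zero.1 hexcess l)).resolve_left hl
  exact le_antisymm (tsub_eq_zero_iff_le.1 this) (hf l)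

theorem tsum_add_one_mul_eq_tsum_tsum_nat_add (f : ℕ → ℝ≥0∞) :
    ∑' n : ℕ, ((n : ℝ≥0∞) + 1) * f n = ∑' m, ∑' n, f (n + m) := by
  have hcount (n : ℕ) : ((n : ℝ≥0∞) + 1) = ∑' m : ℕ, if m ≤ n then 1 else 0 := by
    rw [tsum_eq_sum (s := range (n + 1)) fun m hm => if_neg (by simpa [Nat.lt_succ_iff] using hm),
      sum_ite_of_true fun m hm => Nat.lt_succ_iff.1 (mem_range.1 hm)]
    simp
  have htail (m : ℕ) : ∑' n, f (n + m) = ∑' n, if m ≤ n then f n else 0 := by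
    rw [← ENNReal.summable.sum_add_tsum_nat_add' (f := fun n : ℕ => if m ≤ n then f n else 0)
      (k := m), sum_eq_zero fun n hn => if_neg (by simpa using hn), zero_add]
    simp
  simp_rw [htail, hcount, ← ENNReal.tsum_mul_right]
  rw [ENNReal.tsum_comm]
  simp

theorem tsum_inv_natCast_add_one : ∑' n : ℕ, ((n : ℝ≥0∞) + 1)⁻¹ = ∞ := by
  have h := (ENNReal.tsum_coe_eq_top_iff_not_summable_coe
    (f := fun n : ℕ => ((n : NNReal) + 1)⁻¹)).2 ?_
  · simpa [ENNReal.coe_inv] using h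
  · push_cast
    exact_mod_cast (summable_nat_add_iff 1).not.2 Real.not_summable_natCast_inv

theorem tendsto_ofReal_div_ofReal_log_atTop (a : ℝ) :
    Tendsto (fun N : ℕ => ENNReal.ofReal a / ENNReal.ofReal (Real.log (1 + N))) atTop (𝓝 0) := by
  have hlog : Tendsto (fun N : ℕ => ENNReal.ofReal (Real.log (1 + N))) atTop (𝓝 ∞) :=
    ENNReal.tendsto_ofReal_atTop.comp <| Real.tendsto_log_atTop.comp <|
      tendsto_atTop_add_const_left _ 1 tendsto_natCast_atTop_atTop
  simpa [div_eq_mul_inv] using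
    ENNReal.Tendsto.const_mul (tendsto_inv_iff.2 hlog) (Or.inr ENNReal.ofReal_ne_top)

end ENNReal

theorem abs_natCast_sub_le_iff_mem_Icc {j k l : ℕ} (hk : k ≤ j) :
    |(j : ℤ) - l| ≤ k ↔ l ∈ Icc (j - k) (j + k) := by
  rw [abs_le, mem_Icc]
  omega

theorem sum_Icc_sub_add {j k : ℕ} (hk : k ≤ j) :
    ∑ l ∈ Icc (j - k) (j + k), l = (2 * k + 1) * j := by
  obtain ⟨m, rfl⟩ := Nat.exists_eq_add_of_le hk
  rw [← Ico_add_one_right_eq_Icc, sum_Ico_eq_sum_range, sum_add_distrib, sum_const, card_range,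
    smul_eq_mul, show k + m + k + 1 - (k + m - k) = 2 * k + 1 by omega, Nat.add_sub_cancel_left]
  have := sum_range_id_mul_two (2 * k + 1)
  simp only [Nat.add_sub_cancel] at this
  nlinarith

theorem sum_Icc_log_le {j k : ℕ} (hk : k ≤ j) :
    ∑ l ∈ Icc (j - k) (j + k), Real.log (1 + l) ≤ (2 * k + 1) * Real.log (1 + j) := by
  have hpos : (0 : ℝ) < 2 * k + 1 := by positivity
  have hcard : #(Icc (j - k) (j + k)) = 2 * k + 1 := by rw [Nat.card_Icc]; omega
  have hmean : ∑ l ∈ Icc (j - k) (j + k), (2 * k + 1 : ℝ)⁻¹ * (1 + l) = 1 + j := by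
    rw [← mul_sum, sum_add_distrib, ← Nat.cast_sum, sum_Icc_sub_add hk]
    simp only [sum_const, hcard, nsmul_eq_mul, mul_one]
    field_simp
    push_cast
    ring
  have := strictConcaveOn_log_Ioi.concaveOn.le_map_sum (t := Icc (j - k) (j + k))
    (w := fun _ => (2 * k + 1 : ℝ)⁻¹) (p := fun l => 1 + (l : ℝ)) (fun _ _ => by positivity)
    (by simp [hcard]; field_simp) (fun l _ => by simp only [Set.mem_Ioi]; positivity)
  simp only [smul_eq_mul] at this
  rwa [hmean, ← mul_sum, inv_mul_le_iff₀ hpos] at this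

namespace MarkovChain

variable {M : MarkovChain}

theorem tsum_p_mul_const (j : ℕ) (a : ℝ≥0∞) : ∑' l, M.p j l * a = a := by
  rw [ENNReal.tsum_mul_right, M.row_sum, one_mul]

theorem tsum_p_mul_le_one {f : ℕ → ℝ≥0∞} (hf : ∀ l, f l ≤ 1) (j : ℕ) :
    ∑' l, M.p j l * f l ≤ 1 :=
  (ENNReal.tsum_le_tsum fun l => mul_le_mul_right (hf l) _).trans (M.tsum_p_mul_const j 1).le

theorem tsum_p_mul_add_le_one {f : ℕ → ℝ≥0∞} (hf : ∀ l, f l ≤ 1) {a : ℕ} {t : ℝ≥0∞}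
    (ht : f a + t ≤ 1) (j : ℕ) : ∑' l, M.p j l * f l + M.p j a * t ≤ 1 := by
  rw [← tsum_ite_eq a (fun _ => M.p j a * t), ← ENNReal.tsum_add]
  refine (ENNReal.tsum_le_tsum fun l => ?_).trans (M.tsum_p_mul_const j 1).le
  split_ifs with hl
  · rw [hl, ← mul_add]
    exact mul_le_mul_right ht _
  · rw [add_zero]
    exact mul_le_mul_right (hf l) _

noncomputable def hitProb (M : MarkovChain) (i j : ℕ) : ℝ≥0∞ := ∑' n, M.hitAt i n j

noncomputable def hitWithin (M : MarkovChain) (i n j : ℕ) : ℝ≥0∞ := ∑ m ∈ range n, M.hitAt i m j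

section Hitting

variable {i : ℕ}

theorem hitAt_succ_of_ne {j : ℕ} (hj : j ≠ i) (n : ℕ) :
    M.hitAt i (n + 1) j = ∑' l, M.p j l * M.hitAt i n l := by
  simp [hitAt, hj]

theorem hitWithin_succ (n j : ℕ) :
    M.hitWithin i (n + 1) j = if j = i then 1 else ∑' l, M.p j l * M.hitWithin i n l := by
  rw [hitWithin, sum_range_succ']
  split_ifs with hj
  · subst hj
    simp [hitAt]
  · simp only [hitAt_succ_of_ne hj, hitWithin, mul_sum]
    rw [Summable.tsum_finsetSum fun _ _ => ENNReal.summable]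
    simp [hitAt, hj]

theorem hitWithin_le_one (n j : ℕ) : M.hitWithin i n j ≤ 1 := by
  induction n generalizing j with
  | zero => simp [hitWithin]
  | succ n ih =>
    rw [hitWithin_succ]
    split_ifs
    exacts [le_rfl, tsum_p_mul_le_one ih j]

theorem hitProb_le_one (j : ℕ) : M.hitProb i j ≤ 1 :=
  ENNReal.tsum_eq_iSup_nat.trans_le (iSup_le fun n => hitWithin_le_one n j)

theorem hitProb_self : M.hitProb i i = 1 := by
  rw [hitProb, tsum_eq_single 0 fun n hn => ?_]
  · simp [hitAt]
  · obtain ⟨n, rfl⟩ := Nat.exists_eq_succ_of_ne_zero hn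
    simp [hitAt]

theorem hitProb_of_ne {j : ℕ} (hj : j ≠ i) :
    M.hitProb i j = ∑' l, M.p j l * M.hitProb i l := by
  rw [hitProb, tsum_eq_zero_add' ENNReal.summable]
  simp only [hitAt_succ_of_ne hj, hitProb, ← ENNReal.tsum_mul_left]
  rw [ENNReal.tsum_comm]
  simp [hitAt, hj]

theorem hitWithin_add_tsum_hitAt (m j : ℕ) :
    M.hitWithin i m j + ∑' n, M.hitAt i (n + m) j = M.hitProb i j :=
  ENNReal.summable.sum_add_tsum_nat_add'

theorem tsum_firstReturn_nat_add (m : ℕ) :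
    ∑' n, M.firstReturn i (n + m) = ∑' l, M.p i l * ∑' n, M.hitAt i (n + m) l := by
  simp only [firstReturn, ← ENNReal.tsum_mul_left]
  exact ENNReal.tsum_comm

theorem recurrent_of_hitProb_eq_one (h : ∀ i j, M.hitProb i j = 1) : M.Recurrent := fun i => by
  have hit : ∀ l, ∑' n, M.hitAt i n l = 1 := h i
  simpa [hit, M.row_sum] using tsum_firstReturn_nat_add (M := M) (i := i) 0

end Hitting

/-- `M.stopped c n j x` is the probability that the chain started at `j` and stopped on entering
`{0, …, c}` is at `x` at time `n`. -/
noncomputable def stopped (M : MarkovChain) (c : ℕ) : ℕ → ℕ → ℕ → ℝ≥0∞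
  | 0, j, x => if x = j then 1 else 0
  | n + 1, j, x => if j ≤ c then (if x = j then 1 else 0) else ∑' l, M.p j l * M.stopped c n l x

noncomputable def absorbed (M : MarkovChain) (c n j : ℕ) : ℝ≥0∞ :=
  ∑' x, if x ≤ c then M.stopped c n j x else 0

section Stopped

variable {c : ℕ}

theorem stopped_of_le {j : ℕ} (hj : j ≤ c) (n x : ℕ) :
    M.stopped c n j x = if x = j then 1 else 0 := by
  cases n <;> simp [stopped, hj]

theorem stopped_succ_of_lt {j : ℕ} (hj : c < j) (n x : ℕ) :
    M.stopped c (n + 1) j x = ∑' l, M.p j l * M.stopped c n l x := by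
  simp [stopped, hj.not_ge]

theorem tsum_stopped (n j : ℕ) : ∑' x, M.stopped c n j x = 1 := by
  induction n generalizing j with
  | zero => simp [stopped]
  | succ n ih =>
    rcases le_or_gt j c with hj | hj
    · simp [stopped_of_le hj]
    · simp_rw [stopped_succ_of_lt hj]
      rw [ENNReal.tsum_comm]
      simp_rw [ENNReal.tsum_mul_left, ih, mul_one, M.row_sum]

theorem absorbed_of_le {j : ℕ} (hj : j ≤ c) (n : ℕ) : M.absorbed c n j = 1 := by
  rw [absorbed, tsum_eq_single j fun x hx => by simp [stopped_of_le hj, hx]]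
  simp [stopped_of_le hj, hj]

theorem absorbed_zero_of_lt {j : ℕ} (hj : c < j) : M.absorbed c 0 j = 0 := by
  refine ENNReal.tsum_eq_zero.2 fun x => ?_
  split_ifs with hx
  · simp [stopped, show x ≠ j by omega]
  · rfl

theorem absorbed_succ_of_lt {j : ℕ} (hj : c < j) (n : ℕ) :
    M.absorbed c (n + 1) j = ∑' l, M.p j l * M.absorbed c n l := by
  simp_rw [absorbed, stopped_succ_of_lt hj, ← ENNReal.tsum_mul_left]
  rw [ENNReal.tsum_comm]
  congr! 2 with x
  split_ifs <;> simp

theorem absorbed_le_one (n j : ℕ) : M.absorbed c n j ≤ 1 :=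
  (ENNReal.tsum_le_tsum fun x => by split_ifs; exacts [le_rfl, zero_le]).trans
    (tsum_stopped n j).le

theorem tsum_natCast_mul_stopped (hdrift : ∀ j, c < j → ∑' l, M.p j l * l = j) (n j : ℕ) :
    ∑' x : ℕ, (x : ℝ≥0∞) * M.stopped c n j x = j := by
  induction n generalizing j with
  | zero => simp [stopped]
  | succ n ih =>
    rcases le_or_gt j c with hj | hj
    · simp [stopped_of_le hj]
    · simp_rw [stopped_succ_of_lt hj, ← ENNReal.tsum_mul_left, mul_left_comm _ (M.p j _)]
      rw [ENNReal.tsum_comm]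
      simp_rw [ENNReal.tsum_mul_left, ih, hdrift j hj]

theorem stopped_eq_zero {d : ℕ} (hjump : ∀ j l, c < j → j + d < l → M.p j l = 0) {n j x : ℕ}
    (hx : j + n * d < x) : M.stopped c n j x = 0 := by
  induction n generalizing j with
  | zero => simp [stopped, show x ≠ j by omega]
  | succ n ih =>
    rcases le_or_gt j c with hj | hj
    · simp [stopped_of_le hj, show x ≠ j by nlinarith]
    · rw [stopped_succ_of_lt hj]
      refine ENNReal.tsum_eq_zero.2 fun l => ?_
      rcases le_or_gt l (j + d) with hl | hl
      · rw [ih (by nlinarith), mul_zero]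
      · rw [hjump j l hj hl, zero_mul]

theorem inv_add_absorbed_le_one {d : ℕ} (hd : 0 < d) (hdrift : ∀ j, c < j → ∑' l, M.p j l * l = j)
    (hjump : ∀ j l, c < j → j + d < l → M.p j l = 0) (n : ℕ) :
    ((n : ℝ≥0∞) + 1)⁻¹ + M.absorbed c n (c + d) ≤ 1 := by
  have hAS : M.absorbed c n (c + d) + ∑' x, (if x ≤ c then 0 else M.stopped c n (c + d) x) = 1 := by
    rw [absorbed, ← ENNReal.tsum_add, ← tsum_stopped (M := M) (c := c) n (c + d)]
    congr! 2 with x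
    split_ifs <;> simp
  have hmean : ((c + d : ℕ) : ℝ≥0∞) ≤ c * M.absorbed c n (c + d) +
      ((c + d + n * d : ℕ) : ℝ≥0∞) * ∑' x, (if x ≤ c then 0 else M.stopped c n (c + d) x) := by
    rw [absorbed, ← tsum_natCast_mul_stopped hdrift n (c + d), ← ENNReal.tsum_mul_left,
      ← ENNReal.tsum_mul_left, ← ENNReal.tsum_add]
    refine ENNReal.tsum_le_tsum fun x => ?_
    split_ifs with hx
    · rw [mul_zero, add_zero]
      gcongr
    · rw [mul_zero, zero_add]
      by_cases hxd : x ≤ c + d + n * d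
      · gcongr
      · simp [stopped_eq_zero hjump (show c + d + n * d < x by omega)]
  set A := M.absorbed c n (c + d)
  set S := ∑' x, if x ≤ c then 0 else M.stopped c n (c + d) x
  have hS : 1 ≤ ((n : ℝ≥0∞) + 1) * S := by
    have : (c : ℝ≥0∞) + d * 1 ≤ c + d * (((n : ℝ≥0∞) + 1) * S) := by
      calc (c : ℝ≥0∞) + d * 1 = (c + d : ℕ) := by push_cast; ring
        _ ≤ c * A + ((c + d + n * d : ℕ) : ℝ≥0∞) * S := hmean
        _ = c * (A + S) + d * ((n + 1) * S) := by push_cast; ring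
        _ = c + d * (((n : ℝ≥0∞) + 1) * S) := by rw [hAS, mul_one]
    exact (ENNReal.mul_le_mul_iff_right (by exact_mod_cast hd.ne') (ENNReal.natCast_ne_top d)).1
      (ENNReal.le_of_add_le_add_left (ENNReal.natCast_ne_top c) this)
  calc ((n : ℝ≥0∞) + 1)⁻¹ + A ≤ S + A := by
        gcongr
        exact ENNReal.inv_le_iff_le_mul (fun _ => by simp) (fun h => by simp at h) |>.2 hS
    _ = 1 := by rw [add_comm, hAS]

theorem hitWithin_succ_le_absorbed {i : ℕ} (hic : i ≤ c) (n j : ℕ) :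
    M.hitWithin i (n + 1) j ≤ M.absorbed c n j := by
  induction n generalizing j with
  | zero =>
    rcases le_or_gt j c with hj | hj
    · exact (hitWithin_le_one _ _).trans (absorbed_of_le hj 0).ge
    · simp [hitWithin, hitAt, show j ≠ i by omega, absorbed_zero_of_lt hj]
  | succ n ih =>
    rcases le_or_gt j c with hj | hj
    · exact (hitWithin_le_one _ _).trans (absorbed_of_le hj _).ge
    · rw [hitWithin_succ, if_neg (by omega), absorbed_succ_of_lt hj]
      exact ENNReal.tsum_le_tsum fun l => mul_le_mul_right (ih l) _

end Stopped

/-- Probability of reaching `{N, N+1, …}` within `n` steps without entering `{0, …, c}` first. -/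
noncomputable def reachAbove (M : MarkovChain) (c N : ℕ) : ℕ → ℕ → ℝ≥0∞
  | 0, j => if N ≤ j then 1 else 0
  | n + 1, j => if N ≤ j then 1 else if j ≤ c then 0 else ∑' l, M.p j l * M.reachAbove c N n l

noncomputable def stayBetween (M : MarkovChain) (c N : ℕ) : ℕ → ℕ → ℝ≥0∞
  | 0, j => if c < j ∧ j < N then 1 else 0
  | n + 1, j => if c < j ∧ j < N then ∑' l, M.p j l * M.stayBetween c N n l else 0

section Escape

variable {c N : ℕ}

theorem stayBetween_of_not_mem {j : ℕ} (hj : ¬(c < j ∧ j < N)) (n : ℕ) :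
    M.stayBetween c N n j = 0 := by
  cases n <;> simp [stayBetween, hj]

theorem stayBetween_le_one (n j : ℕ) : M.stayBetween c N n j ≤ 1 := by
  induction n generalizing j with
  | zero => simp only [stayBetween]; split_ifs <;> simp
  | succ n ih => simp only [stayBetween]; split_ifs; exacts [tsum_p_mul_le_one ih j, zero_le]

theorem reachAbove_of_le {j : ℕ} (hj : N ≤ j) (n : ℕ) : M.reachAbove c N n j = 1 := by
  cases n <;> simp [reachAbove, hj]

theorem one_le_absorbed_add_reachAbove_add_stayBetween (n j : ℕ) :
    1 ≤ M.absorbed c n j + M.reachAbove c N n j + M.stayBetween c N n j := by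
  have boundary (n j : ℕ) (hj : ¬(c < j ∧ j < N)) :
      1 ≤ M.absorbed c n j + M.reachAbove c N n j + M.stayBetween c N n j := by
    rcases le_or_gt j c with hc | hc
    · rw [absorbed_of_le hc]
      exact le_add_right (le_add_right le_rfl)
    · rw [reachAbove_of_le (by omega)]
      exact le_add_right (le_add_left le_rfl)
  induction n generalizing j with
  | zero =>
    by_cases hj : c < j ∧ j < N
    · simp [stayBetween, hj]
    · exact boundary 0 j hj
  | succ n ih =>
    by_cases hj : c < j ∧ j < N
    · rw [absorbed_succ_of_lt hj.1]
      simp only [reachAbove, stayBetween, hj, hj.1.not_ge, hj.2.not_ge, if_false, and_self,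
        if_true]
      calc 1 = ∑' l, M.p j l * 1 := (M.tsum_p_mul_const j 1).symm
        _ ≤ ∑' l, M.p j l * (M.absorbed c n l + M.reachAbove c N n l + M.stayBetween c N n l) :=
          ENNReal.tsum_le_tsum fun l => mul_le_mul_right (ih l) _
        _ = _ := by simp only [mul_add, ENNReal.tsum_add]
    · exact boundary (n + 1) j hj

theorem reachAbove_le {V : ℕ → ℝ≥0∞} (hV : ∀ j, c < j → j < N → ∑' l, M.p j l * V l ≤ V j)
    (hVN : ∀ j, N ≤ j → 1 ≤ V j) (n j : ℕ) : M.reachAbove c N n j ≤ V j := by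
  induction n generalizing j with
  | zero =>
    simp only [reachAbove]
    split_ifs with hN
    exacts [hVN j hN, zero_le]
  | succ n ih =>
    simp only [reachAbove]
    split_ifs with hN hc
    · exact hVN j hN
    · exact zero_le
    · exact (ENNReal.tsum_le_tsum fun l => mul_le_mul_right (ih l) _).trans
        (hV j (by omega) (by omega))

theorem stayBetween_add_le {m : ℕ} {ρ : ℝ≥0∞} (hρ : ∀ l, M.stayBetween c N m l ≤ ρ) (n j : ℕ) :
    M.stayBetween c N (n + m) j ≤ M.stayBetween c N n j * ρ := by
  induction n generalizing j with
  | zero =>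
    by_cases hj : c < j ∧ j < N
    · simpa [stayBetween, hj] using hρ j
    · simp [stayBetween_of_not_mem hj]
  | succ n ih =>
    by_cases hj : c < j ∧ j < N
    · rw [add_right_comm]
      simp only [stayBetween, if_pos hj, ← ENNReal.tsum_mul_right, mul_assoc]
      exact ENNReal.tsum_le_tsum fun l => mul_le_mul_right (ih l) _
    · simp [stayBetween_of_not_mem hj]

theorem stayBetween_mul_le_pow {m : ℕ} {ρ : ℝ≥0∞} (hρ : ∀ l, M.stayBetween c N m l ≤ ρ)
    (b j : ℕ) : M.stayBetween c N (b * m) j ≤ ρ ^ b := by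
  induction b generalizing j with
  | zero => simpa using stayBetween_le_one 0 j
  | succ b ih =>
    rw [add_mul, one_mul, pow_succ]
    calc _ ≤ M.stayBetween c N (b * m) j * ρ := stayBetween_add_le hρ _ j
      _ ≤ ρ ^ b * ρ := by gcongr; exact ih j

theorem iSup_absorbed_eq_one_of_reachAbove_add_stayBetween_le {j : ℕ}
    (h : ∀ ε : ℝ≥0∞, 0 < ε → ∃ N n, M.reachAbove c N n j + M.stayBetween c N n j ≤ ε) :
    ⨆ n, M.absorbed c n j = 1 := by
  refine le_antisymm (iSup_le fun n => absorbed_le_one n j)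
    (ENNReal.le_of_forall_pos_le_add fun ε hε _ => ?_)
  obtain ⟨N, n, hNn⟩ := h ε (by exact_mod_cast hε)
  calc 1 ≤ M.absorbed c n j + M.reachAbove c N n j + M.stayBetween c N n j :=
        one_le_absorbed_add_reachAbove_add_stayBetween n j
    _ ≤ (⨆ n, M.absorbed c n j) + ε := by
        rw [add_assoc]
        exact add_le_add (le_iSup (M.absorbed c · j) n) hNn

end Escape

section Criteria

variable {i c : ℕ}

theorem le_hitProb_of_iSup_absorbed_eq_one {θ : ℝ≥0∞} (hic : i ≤ c)
    (hθ : ∀ a ≤ c, θ ≤ M.hitProb i a) {j : ℕ} (hj : ⨆ n, M.absorbed c n j = 1) :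
    θ ≤ M.hitProb i j := by
  have base (n j : ℕ) (hjc : j ≤ c) : θ * M.absorbed c n j ≤ M.hitProb i j := by
    rw [absorbed_of_le hjc, mul_one]
    exact hθ j hjc
  have key (n j : ℕ) : θ * M.absorbed c n j ≤ M.hitProb i j := by
    induction n generalizing j with
    | zero =>
      rcases le_or_gt j c with hjc | hjc
      · exact base 0 j hjc
      · simp [absorbed_zero_of_lt hjc]
    | succ n ih =>
      rcases le_or_gt j c with hjc | hjc
      · exact base _ j hjc
      · rw [absorbed_succ_of_lt hjc, ← ENNReal.tsum_mul_left, hitProb_of_ne (by omega)]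
        exact ENNReal.tsum_le_tsum fun l => by
          rw [mul_left_comm]
          exact mul_le_mul_right (ih l) _
  calc θ = ⨆ n, θ * M.absorbed c n j := by rw [← ENNReal.mul_iSup, hj, mul_one]
    _ ≤ M.hitProb i j := iSup_le fun n => key n j

theorem hitProb_eq_of_step_pos {θ : ℝ≥0∞} (hθ : θ < 1) (hle : ∀ l, θ ≤ M.hitProb i l) (n : ℕ) :
    ∀ x j, M.hitProb i x = θ → 0 < M.step n x j → M.hitProb i j = θ := by
  induction n with
  | zero =>
    intro x j hx hpos
    obtain rfl : x = j := by by_contra h; simp [step, h] at hpos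
    exact hx
  | succ n ih =>
    intro x j hx hpos
    obtain ⟨l, hl⟩ : ∃ l, M.p x l * M.step n l j ≠ 0 := by
      by_contra! h
      simp [step, ENNReal.tsum_eq_zero.2 h] at hpos
    have hxi : x ≠ i := by rintro rfl; rw [hitProb_self] at hx; exact hθ.ne' hx
    refine ih l j ?_ (pos_iff_ne_zero.2 (right_ne_zero_of_mul hl))
    exact ENNReal.eq_of_tsum_mul_le (M.row_sum x) (hθ.trans ENNReal.one_lt_top).ne hle
      (by rw [← hitProb_of_ne hxi, hx]) (left_ne_zero_of_mul hl)

theorem hitProb_eq_one (hirr : M.Irreducible) (hic : i ≤ c)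
    (habs : ∀ j, ⨆ n, M.absorbed c n j = 1) (j : ℕ) : M.hitProb i j = 1 := by
  obtain ⟨a, ha, hmin⟩ := (range (c + 1)).exists_min_image (M.hitProb i) nonempty_range_add_one
  have hle (l : ℕ) : M.hitProb i a ≤ M.hitProb i l :=
    le_hitProb_of_iSup_absorbed_eq_one hic (fun b hb => hmin b (mem_range.2 (by omega))) (habs l)
  have ha1 : M.hitProb i a = 1 := by
    by_contra ha1
    obtain ⟨n, hn⟩ := hirr a i
    have := hitProb_eq_of_step_pos ((hitProb_le_one a).lt_of_ne ha1) hle n a i rfl hn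
    exact ha1 (this.symm.trans hitProb_self)
  exact le_antisymm (hitProb_le_one j) (ha1 ▸ hle j)

theorem tsum_add_one_mul_firstReturn_eq_top {d : ℕ} (hd : 0 < d) (hic : i ≤ c)
    (hdrift : ∀ j, c < j → ∑' l, M.p j l * l = j)
    (hjump : ∀ j l, c < j → j + d < l → M.p j l = 0)
    (hhit : M.hitProb i (c + d) = 1) (hp : M.p i (c + d) ≠ 0) :
    ∑' n : ℕ, ((n : ℝ≥0∞) + 1) * M.firstReturn i n = ∞ := by
  have htail (m : ℕ) : ((m : ℝ≥0∞) + 1)⁻¹ ≤ ∑' n, M.hitAt i (n + (m + 1)) (c + d) := by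
    refine ENNReal.le_of_add_le_add_left
      ((hitWithin_le_one (M := M) (i := i) (m + 1) (c + d)).trans_lt ENNReal.one_lt_top).ne ?_
    calc M.hitWithin i (m + 1) (c + d) + ((m : ℝ≥0∞) + 1)⁻¹
        ≤ M.absorbed c m (c + d) + ((m : ℝ≥0∞) + 1)⁻¹ := by
          gcongr
          exact hitWithin_succ_le_absorbed hic m (c + d)
      _ ≤ 1 := by
          rw [add_comm]
          exact inv_add_absorbed_le_one hd hdrift hjump m
      _ = _ := by rw [hitWithin_add_tsum_hitAt, hhit]
  have hreturn (m : ℕ) :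
      M.p i (c + d) * ((m : ℝ≥0∞) + 1)⁻¹ ≤ ∑' n, M.firstReturn i (n + (m + 1)) := by
    rw [tsum_firstReturn_nat_add]
    exact (mul_le_mul_right (htail m) _).trans
      (ENNReal.le_tsum (f := fun l => M.p i l * ∑' n, M.hitAt i (n + (m + 1)) l) (c + d))
  rw [ENNReal.tsum_add_one_mul_eq_tsum_tsum_nat_add, eq_top_iff]
  calc ∞ = ∑' m : ℕ, M.p i (c + d) * ((m : ℝ≥0∞) + 1)⁻¹ := by
        rw [ENNReal.tsum_mul_left, ENNReal.tsum_inv_natCast_add_one, ENNReal.mul_top hp]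
    _ ≤ ∑' m, ∑' n, M.firstReturn i (n + (m + 1)) := ENNReal.tsum_le_tsum hreturn
    _ ≤ ∑' m, ∑' n, M.firstReturn i (n + m) := by
        rw [tsum_eq_zero_add' (f := fun m => ∑' n, M.firstReturn i (n + m)) ENNReal.summable]
        exact le_add_self

end Criteria

def IsUniformWalkAbove (M : MarkovChain) (k : ℕ) : Prop :=
  ∀ i j : ℕ, k ≤ i →
    M.p i j = if |(i : ℤ) - j| ≤ (k : ℤ) then (2 * (k : ℝ≥0∞) + 1)⁻¹ else 0

namespace IsUniformWalkAbove

variable {k : ℕ}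

theorem p_of_mem_Icc (hw : M.IsUniformWalkAbove k) {j l : ℕ} (hj : k ≤ j)
    (hl : l ∈ Icc (j - k) (j + k)) : M.p j l = (2 * (k : ℝ≥0∞) + 1)⁻¹ := by
  rw [hw j l hj, if_pos ((abs_natCast_sub_le_iff_mem_Icc hj).2 hl)]

theorem p_eq_zero_of_lt (hw : M.IsUniformWalkAbove k) {j l : ℕ} (hj : k ≤ j) (hl : j + k < l) :
    M.p j l = 0 := by
  rw [hw j l hj, if_neg fun h => by
    have := mem_Icc.1 ((abs_natCast_sub_le_iff_mem_Icc hj).1 h)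
    omega]

theorem tsum_p_mul (hw : M.IsUniformWalkAbove k) {j : ℕ} (hj : k ≤ j) (f : ℕ → ℝ≥0∞) :
    ∑' l, M.p j l * f l = (2 * (k : ℝ≥0∞) + 1)⁻¹ * ∑ l ∈ Icc (j - k) (j + k), f l := by
  rw [tsum_eq_sum (s := Icc (j - k) (j + k)), mul_sum]
  · exact sum_congr rfl fun l hl => by rw [hw.p_of_mem_Icc hj hl]
  · intro l hl
    rw [hw j l hj, if_neg fun h => hl ((abs_natCast_sub_le_iff_mem_Icc hj).1 h), zero_mul]

theorem tsum_p_mul_natCast (hw : M.IsUniformWalkAbove k) {j : ℕ} (hj : k ≤ j) :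
    ∑' l, M.p j l * l = j := by
  rw [hw.tsum_p_mul hj, ← Nat.cast_sum, sum_Icc_sub_add hj, Nat.cast_mul, ← mul_assoc]
  push_cast
  rw [ENNReal.inv_mul_cancel (by simp) (by simp [ENNReal.mul_eq_top]), one_mul]

theorem tsum_p_mul_log_le (hw : M.IsUniformWalkAbove k) {j : ℕ} (hj : k ≤ j) :
    ∑' l, M.p j l * ENNReal.ofReal (Real.log (1 + l)) ≤ ENNReal.ofReal (Real.log (1 + j)) := by
  have hlog (l : ℕ) : 0 ≤ Real.log (1 + l) := Real.log_nonneg (by simp)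
  rw [hw.tsum_p_mul hj, ← ENNReal.ofReal_sum_of_nonneg fun l _ => hlog l,
    show (2 * (k : ℝ≥0∞) + 1)⁻¹ = ENNReal.ofReal (2 * k + 1)⁻¹ by
      rw [ENNReal.ofReal_inv_of_pos (by positivity)]; norm_cast,
    ← ENNReal.ofReal_mul (by positivity)]
  exact ENNReal.ofReal_le_ofReal <| (inv_mul_le_iff₀ (by positivity)).2 (sum_Icc_log_le hj)

theorem reachAbove_le_log_div (hw : M.IsUniformWalkAbove k) {c N : ℕ} (hc : k ≤ c) (hN : 0 < N)
    (n j : ℕ) : M.reachAbove c N n j ≤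
      ENNReal.ofReal (Real.log (1 + j)) / ENNReal.ofReal (Real.log (1 + N)) := by
  have hlogN : ENNReal.ofReal (Real.log (1 + N)) ≠ 0 :=
    (ENNReal.ofReal_pos.2 (Real.log_pos (by simpa using hN))).ne'
  refine reachAbove_le (V := fun l => ENNReal.ofReal (Real.log (1 + l)) / _)
    (fun l hl _ => ?_) (fun l hl => ?_) n j
  · simp_rw [div_eq_mul_inv, ← mul_assoc, ENNReal.tsum_mul_right]
    gcongr
    exact hw.tsum_p_mul_log_le (by omega)
  · rw [ENNReal.le_div_iff_mul_le (Or.inl hlogN) (Or.inl ENNReal.ofReal_ne_top), one_mul]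
    gcongr

theorem stayBetween_add_pow_le_one (hw : M.IsUniformWalkAbove k) {c N : ℕ} (hc : k ≤ c)
    (n j : ℕ) (hj : j ≤ c + n * k) :
    M.stayBetween c N n j + (2 * (k : ℝ≥0∞) + 1)⁻¹ ^ n ≤ 1 := by
  induction n generalizing j with
  | zero => rw [stayBetween_of_not_mem (by omega), pow_zero, zero_add]
  | succ n ih =>
    rw [Nat.succ_mul] at hj
    by_cases hjN : c < j ∧ j < N
    · simp only [stayBetween, if_pos hjN]
      have hdown := hw.p_of_mem_Icc (j := j) (l := j - k) (by omega) (mem_Icc.2 (by omega))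
      have := tsum_p_mul_add_le_one (M := M) (stayBetween_le_one n) (ih (j - k) (by omega)) j
      rwa [hdown, ← pow_succ'] at this
    · rw [stayBetween_of_not_mem hjN, zero_add]
      exact pow_le_one₀ zero_le (ENNReal.inv_le_one.2 le_add_self)

theorem stayBetween_le_one_sub_pow (hw : M.IsUniformWalkAbove k) (hk : 0 < k) {c N : ℕ}
    (hc : k ≤ c) (j : ℕ) : M.stayBetween c N N j ≤ 1 - (2 * (k : ℝ≥0∞) + 1)⁻¹ ^ N := by
  by_cases hj : c < j ∧ j < N
  · exact ENNReal.le_sub_of_add_le_right (by simp)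
      (hw.stayBetween_add_pow_le_one hc N j (by nlinarith))
  · simp [stayBetween_of_not_mem hj]

theorem iSup_absorbed_eq_one (hw : M.IsUniformWalkAbove k) (hk : 0 < k) {c : ℕ} (hc : k ≤ c)
    (j : ℕ) : ⨆ n, M.absorbed c n j = 1 := by
  refine iSup_absorbed_eq_one_of_reachAbove_add_stayBetween_le fun ε hε => ?_
  have hε2 : 0 < ε / 2 := ENNReal.half_pos hε.ne'
  obtain ⟨N, hVN, hcN⟩ := (((ENNReal.tendsto_ofReal_div_ofReal_log_atTop _).eventually
    (ge_mem_nhds hε2)).and (eventually_gt_atTop c)).exists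
  have hρ : 1 - (2 * (k : ℝ≥0∞) + 1)⁻¹ ^ N < 1 :=
    ENNReal.sub_lt_self ENNReal.one_ne_top one_ne_zero (by simp [ENNReal.mul_eq_top])
  obtain ⟨b, hb⟩ := ((ENNReal.tendsto_pow_atTop_nhds_zero_of_lt_one hρ).eventually
    (ge_mem_nhds hε2)).exists
  refine ⟨N, b * N, ?_⟩
  calc _ ≤ ε / 2 + ε / 2 := add_le_add
        ((hw.reachAbove_le_log_div hc (by omega) _ j).trans hVN)
        ((stayBetween_mul_le_pow (hw.stayBetween_le_one_sub_pow hk hc) b j).trans hb)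
    _ = ε := ENNReal.add_halves ε

end IsUniformWalkAbove

end MarkovChain

theorem stmt5_general (M : MarkovChain) (k : ℕ) (hk : 0 < k)
    (hirr : M.Irreducible)
    (h_walk : ∀ i j : ℕ, k ≤ i →
      M.p i j = if |(i : ℤ) - j| ≤ (k : ℤ) then (2 * (k : ℝ≥0∞) + 1)⁻¹ else 0) :
    M.NullRecurrent := by
  have hw : M.IsUniformWalkAbove k := h_walk
  have hhit (i j : ℕ) : M.hitProb i j = 1 :=
    M.hitProb_eq_one hirr (le_max_left i k) (hw.iSup_absorbed_eq_one hk (le_max_right i k)) j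
  refine ⟨M.recurrent_of_hitProb_eq_one hhit, fun hpos => (hpos.2 k).ne ?_⟩
  refine M.tsum_add_one_mul_firstReturn_eq_top hk le_rfl (fun j hj => hw.tsum_p_mul_natCast hj.le)
    (fun j l hj => hw.p_eq_zero_of_lt hj.le) (hhit k (k + k)) ?_
  rw [hw.p_of_mem_Icc le_rfl (mem_Icc.2 (by omega))]
  simp [ENNReal.mul_eq_top]

/-- the random walk that moves to each of the `2k+1` nearest states
with equal probability (and moves up by one below `k`) is null recurrent. -/
theorem stmt5 (M : MarkovChain) (k : ℕ) (hk : 0 < k)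
    (hirr : M.Irreducible)
    (h_up : ∀ i j : ℕ, i < k → M.p i j = if j = i + 1 then 1 else 0)
    (h_walk : ∀ i j : ℕ, k ≤ i →
      M.p i j = if |(i : ℤ) - j| ≤ (k : ℤ) then (2 * (k : ℝ≥0∞) + 1)⁻¹ else 0) :
    M.NullRecurrent :=
  stmt5_general M k hk hirr h_walk
end
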